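/- arXiv:2405.06689 — 3 statements merged into one kernel-verified Lean document; each statement's English description precedes it below -/
import Mathlib

section
/- Consider an SSG with the best-response follower. If f' is a Pareto-optimal leader policy (i.e., V_A^{f'†} ∈ 𝒫𝒱), then for every leader policy f: if Q_A^{f'†}(s, f) ≥ V_A^{f'†}(s) for all s ∈ S, then V_A^{f†}(s) = V_A^{f'†}(s) for all s ∈ S. -/
open Finset

/-- A probability distribution on a finite type, represented as a function. -/
def IsDist {α : Type*} [Fintype α] (d : α → ℝ) : Prop :=
  (∀ x, 0 ≤ d x) ∧ ∑ x, d x = 1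

/-- A (stationary stochastic) policy: a distribution over actions at each state. -/
def IsPol {S α : Type*} [Fintype α] (f : S → α → ℝ) : Prop :=
  ∀ s, IsDist (f s)

/-- A deterministic policy viewed as a stochastic one. -/
noncomputable def det {S α : Type*} [DecidableEq α] (g : S → α) : S → α → ℝ :=
  fun s a => if a = g s then 1 else 0

/-- `V` is the value function of the policy pair `(f, g)` for reward `r`,
discount `γ` and transition kernel `p`, i.e. `V` satisfies the Bellman
expectation equation (whose solution is unique since `γ < 1`). -/
def IsValue {S A B : Type*} [Fintype S] [Fintype A] [Fintype B]
    (p : S → A → B → S → ℝ) (r : S → A → B → ℝ) (γ : ℝ)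
    (f : S → A → ℝ) (g : S → B → ℝ) (V : S → ℝ) : Prop :=
  ∀ s, V s = ∑ a, ∑ b, f s a * g s b * (r s a b + γ * ∑ s', p s a b s' * V s')

/-- Weak dominance `v ≽ w`. -/
def DomGE {S : Type*} (v w : S → ℝ) : Prop := ∀ s, w s ≤ v s

/-- Strict dominance `v ≻ w`. -/
def SDom {S : Type*} (v w : S → ℝ) : Prop := DomGE v w ∧ v ≠ w

/-- A two-player stochastic Stackelberg game together with its value functions:
finite state/action spaces, transition kernel, bounded rewards, discount rates
in `[0,1)`, and for every pair of (stochastic) policies the associated value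
functions `VA`, `VB`, characterized as the (unique) solutions of the Bellman
expectation equations. -/
structure SSGVal (S A B : Type*) [Fintype S] [Fintype A] [Fintype B] where
  p : S → A → B → S → ℝ
  hp : ∀ s a b, IsDist (p s a b)
  rA : S → A → B → ℝ
  rB : S → A → B → ℝ
  gA : ℝ
  gB : ℝ
  hgA0 : 0 ≤ gA
  hgA1 : gA < 1
  hgB0 : 0 ≤ gB
  hgB1 : gB < 1
  VA : (S → A → ℝ) → (S → B → ℝ) → S → ℝ
  VB : (S → A → ℝ) → (S → B → ℝ) → S → ℝ
  hVA : ∀ f g, IsPol f → IsPol g → IsValue p rA gA f g (VA f g)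
  hVB : ∀ f g, IsPol f → IsPol g → IsValue p rB gB f g (VB f g)

/-- An SSG with a best-response follower: `Rstar f` is the unique deterministic
best response of the follower to the leader policy `f`. -/
structure Setup (S A B : Type*) [Fintype S] [Fintype A] [Fintype B] [DecidableEq B]
    extends SSGVal S A B where
  Rstar : (S → A → ℝ) → S → B
  hRstar : ∀ f, IsPol f → ∀ g, IsPol g → ∀ s, VB f g s ≤ VB f (det (Rstar f)) s
  hRstarU : ∀ f, IsPol f → ∀ h : S → B,
      (∀ g, IsPol g → ∀ s, VB f g s ≤ VB f (det h) s) → h = Rstar f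

namespace Setup

variable {S A B : Type*} [Fintype S] [Fintype A] [Fintype B] [DecidableEq B]

/-- `V_A^{f†}`: the leader's value under the best-response follower. -/
noncomputable def VAdag (M : Setup S A B) (f : S → A → ℝ) : S → ℝ :=
  M.VA f (det (M.Rstar f))

/-- Marginalized leader reward `r_A(s, f(s), b)`. -/
def rAf (M : Setup S A B) (f : S → A → ℝ) (s : S) (b : B) : ℝ :=
  ∑ a, f s a * M.rA s a b

/-- Marginalized transition `p(s' | s, f(s), b)`. -/
def pf (M : Setup S A B) (f : S → A → ℝ) (s : S) (b : B) (s' : S) : ℝ :=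
  ∑ a, f s a * M.p s a b s'

/-- `Q_A^{f'†}(s, f)`. -/
noncomputable def Q (M : Setup S A B) (f' f : S → A → ℝ) (s : S) : ℝ :=
  M.rAf f s (M.Rstar f s) + M.gA * ∑ s', M.pf f s (M.Rstar f s) s' * M.VAdag f' s'

/-- `𝒱`: the set of reachable leader value functions under the best-response follower. -/
def Vset (M : Setup S A B) : Set (S → ℝ) := {v | ∃ f, IsPol f ∧ v = M.VAdag f}

/-- `𝒫𝒱`: the set of Pareto-optimal value functions in `cl 𝒱`. -/
def PV (M : Setup S A B) : Set (S → ℝ) :=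
  {v | v ∈ closure M.Vset ∧ ¬ ∃ w ∈ closure M.Vset, SDom w v}

/-- `W_≽(f')`: policies satisfying the policy-improvement condition from `f'`. -/
noncomputable def Wge (M : Setup S A B) (f' : S → A → ℝ) : Set (S → A → ℝ) :=
  {f | IsPol f ∧ ∀ s, M.VAdag f' s ≤ M.Q f' f s}

/-- `W_{1-ε}(f')`: ε-optimal improving policies for the scalarization `L`. -/
noncomputable def Weps (M : Setup S A B) (L : (S → ℝ) → ℝ) (ε : ℝ) (f' : S → A → ℝ) :
    Set (S → A → ℝ) :=
  {f | f ∈ M.Wge f' ∧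
    (1 - ε) * sSup ((fun h => L (M.Q f' h) - L (M.VAdag f')) '' M.Wge f')
      ≤ L (M.Q f' f) - L (M.VAdag f')}

end Setup

lemma det_isPol {S B : Type*} [Fintype B] [DecidableEq B] (g : S → B) :
    IsPol (det g) := by
  intro s
  constructor
  · intro b; unfold det; split <;> norm_num
  · simp [det]

lemma bellman_dag {S A B : Type*} [Fintype S] [Fintype A] [Fintype B] [DecidableEq B]
    (M : Setup S A B) (f : S → A → ℝ) (hf : IsPol f) (s : S) :
    M.VAdag f s = M.rAf f s (M.Rstar f s)
      + M.gA * ∑ s', M.pf f s (M.Rstar f s) s' * M.VAdag f s' := by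
  have h := M.hVA f (det (M.Rstar f)) hf (det_isPol _) s
  unfold Setup.VAdag Setup.rAf Setup.pf
  unfold Setup.VAdag at h
  rw [h]
  have hc : ∀ a, ∑ b, f s a * det (M.Rstar f) s b *
      (M.rA s a b + M.gA * ∑ s', M.p s a b s' * M.VA f (det (M.Rstar f)) s')
      = f s a * (M.rA s a (M.Rstar f s)
        + M.gA * ∑ s', M.p s a (M.Rstar f s) s' * M.VA f (det (M.Rstar f)) s') := by
    intro a
    rw [Finset.sum_eq_single (M.Rstar f s)]
    · simp [det]
    · intro b _ hb; simp [det, hb]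
    · intro h; exact absurd (Finset.mem_univ _) h
  rw [Finset.sum_congr rfl (fun a _ => hc a)]
  simp only [mul_add, Finset.sum_add_distrib, Finset.mul_sum, Finset.sum_mul]
  congr 1
  rw [Finset.sum_comm]
  exact Finset.sum_congr rfl fun a _ => Finset.sum_congr rfl fun s' _ => by ring

theorem stmt12 {S A B : Type*} [Fintype S] [Fintype A] [Fintype B]
    [Nonempty S] [Nonempty A] [Nonempty B] [DecidableEq B]
    (M : Setup S A B)
    (f' : S → A → ℝ) (hf' : IsPol f') (hPO : M.VAdag f' ∈ M.PV) :
    ∀ f, IsPol f → (∀ s, M.VAdag f' s ≤ M.Q f' f s) →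
      ∀ s, M.VAdag f s = M.VAdag f' s := by
  intro f hf hQ
  -- pf is a distribution
  have hpf0 : ∀ s b s', 0 ≤ M.pf f s b s' := by
    intro s b s'
    exact Finset.sum_nonneg fun a _ => mul_nonneg ((hf s).1 a) ((M.hp s a b).1 s')
  have hpf1 : ∀ s b, ∑ s', M.pf f s b s' = 1 := by
    intro s b
    unfold Setup.pf
    rw [Finset.sum_comm]
    calc ∑ a, ∑ s', f s a * M.p s a b s' = ∑ a, f s a := by
          apply Finset.sum_congr rfl; intro a _
          rw [← Finset.mul_sum, (M.hp s a b).2, mul_one]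
      _ = 1 := (hf s).2
  -- the difference function
  set d : S → ℝ := fun s => M.VAdag f s - M.VAdag f' s with hd
  have key : ∀ s, M.gA * ∑ s', M.pf f s (M.Rstar f s) s' * d s' ≤ d s := by
    intro s
    have h1 := hQ s
    have h2 := bellman_dag M f hf s
    have hQexp : M.Q f' f s = M.rAf f s (M.Rstar f s)
        + M.gA * ∑ s', M.pf f s (M.Rstar f s) s' * M.VAdag f' s' := rfl
    have : d s = (M.VAdag f s - M.Q f' f s) + (M.Q f' f s - M.VAdag f' s) := by
      simp [hd]
    rw [this]
    have hsub : M.VAdag f s - M.Q f' f s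
        = M.gA * ∑ s', M.pf f s (M.Rstar f s) s' * d s' := by
      rw [h2, hQexp]
      simp only [hd, mul_sub, Finset.sum_sub_distrib]
      ring
    rw [hsub]
    linarith
  -- d is nonneg via min argument
  obtain ⟨s0, _, hs0⟩ := Finset.exists_min_image Finset.univ d ⟨Classical.arbitrary S, Finset.mem_univ _⟩
  have hmin : ∀ s, d s0 ≤ d s := fun s => hs0 s (Finset.mem_univ s)
  have havg : d s0 ≤ ∑ s', M.pf f s0 (M.Rstar f s0) s' * d s' := by
    calc d s0 = ∑ s', M.pf f s0 (M.Rstar f s0) s' * d s0 := by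
          rw [← Finset.sum_mul, hpf1, one_mul]
      _ ≤ _ := Finset.sum_le_sum fun s' _ =>
          mul_le_mul_of_nonneg_left (hmin s') (hpf0 _ _ _)
  have hgd : M.gA * d s0 ≤ d s0 := by
    calc M.gA * d s0 ≤ M.gA * ∑ s', M.pf f s0 (M.Rstar f s0) s' * d s' :=
          mul_le_mul_of_nonneg_left havg M.hgA0
      _ ≤ d s0 := key s0
  have hd0 : 0 ≤ d s0 := by nlinarith [M.hgA1]
  have hdom : ∀ s, M.VAdag f' s ≤ M.VAdag f s := by
    intro s
    have := hmin s
    simp only [hd] at this hd0 ⊢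
    linarith
  -- Pareto optimality
  by_contra hne
  push_neg at hne
  obtain ⟨s1, hs1⟩ := hne
  exact hPO.2 ⟨M.VAdag f, subset_closure ⟨f, hf, rfl⟩, hdom,
    fun h => hs1 (by rw [h])⟩
end

section
/- Consider an SSG with the best-response follower, a Pareto-compliant scalarization L, and ε ∈ [0,1). Let f_0 be any leader policy and let {f_t} satisfy f_{t+1} ∈ W_{1−ε}(f_t) for all t ≥ 0; set v_t := V_A^{f_t†}. Then the sequence {v_t} is monotone in the dominance order, v_{t+1} ≽ v_t for all t, and it converges pointwise to some v_∞ ∈ cl 𝒱, i.e., v_∞(s) = lim_{t→∞} v_t(s) exists for every s ∈ S. -/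
open Finset

section Aux

variable {S A B : Type*} [Fintype S] [Fintype A] [Fintype B] [DecidableEq B]

lemma isPol_det (g : S → B) : IsPol (det g) := by
  intro s
  constructor
  · intro b; unfold det; split <;> norm_num
  · simp [det]

lemma sum_fg_le {f : S → A → ℝ} {g : S → B → ℝ}
    (hf : IsPol f) (hg : IsPol g) (s : S) (X : A → B → ℝ) (c : ℝ)
    (hX : ∀ a b, X a b ≤ c) :
    ∑ a, ∑ b, f s a * g s b * X a b ≤ c := by
  have hconst : ∑ a : A, ∑ b : B, f s a * g s b * c = c := by
    have h1 : ∀ a, ∑ b : B, f s a * g s b * c = f s a * c := by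
      intro a
      have h2 : ∀ b, f s a * g s b * c = (f s a * c) * g s b := fun b => by ring
      simp_rw [h2]
      rw [← Finset.mul_sum, (hg s).2, mul_one]
    simp_rw [h1]
    rw [← Finset.sum_mul, (hf s).2, one_mul]
  calc ∑ a, ∑ b, f s a * g s b * X a b
      ≤ ∑ a, ∑ b, f s a * g s b * c := by
        refine Finset.sum_le_sum fun a _ => Finset.sum_le_sum fun b _ => ?_
        exact mul_le_mul_of_nonneg_left (hX a b) (mul_nonneg ((hf s).1 a) ((hg s).1 b))
    _ = c := hconst

lemma bellman_le [Nonempty S]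
    {p : S → A → B → S → ℝ} (hp : ∀ s a b, IsDist (p s a b))
    {r : S → A → B → ℝ} {γ : ℝ} (hγ0 : 0 ≤ γ) (hγ1 : γ < 1)
    {f : S → A → ℝ} {g : S → B → ℝ} (hf : IsPol f) (hg : IsPol g)
    {v w : S → ℝ} (hv : IsValue p r γ f g v)
    (hw : ∀ s, w s ≤ ∑ a, ∑ b, f s a * g s b *
      (r s a b + γ * ∑ s', p s a b s' * w s')) :
    ∀ s, w s ≤ v s := by
  set d := Finset.univ.sup' Finset.univ_nonempty (fun s => w s - v s) with hd
  have hle : ∀ s, w s - v s ≤ d := fun s =>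
    Finset.le_sup' (fun s => w s - v s) (Finset.mem_univ s)
  have key : ∀ s, w s - v s ≤ γ * d := by
    intro s
    have e : ∑ a, ∑ b, f s a * g s b * (γ * ∑ s', p s a b s' * (w s' - v s'))
        = (∑ a, ∑ b, f s a * g s b * (r s a b + γ * ∑ s', p s a b s' * w s'))
          - (∑ a, ∑ b, f s a * g s b * (r s a b + γ * ∑ s', p s a b s' * v s')) := by
      rw [← Finset.sum_sub_distrib]
      refine Finset.sum_congr rfl fun a _ => ?_
      rw [← Finset.sum_sub_distrib]
      refine Finset.sum_congr rfl fun b _ => ?_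
      simp only [mul_sub, Finset.sum_sub_distrib]
      ring
    have h1 : w s - v s ≤ ∑ a, ∑ b, f s a * g s b *
        (γ * ∑ s', p s a b s' * (w s' - v s')) := by
      rw [e, ← hv s]
      linarith [hw s]
    refine h1.trans (sum_fg_le hf hg s _ (γ * d) fun a b => ?_)
    have hps : ∑ s', p s a b s' * (w s' - v s') ≤ d := by
      calc ∑ s', p s a b s' * (w s' - v s') ≤ ∑ s', p s a b s' * d :=
            Finset.sum_le_sum fun s' _ =>
              mul_le_mul_of_nonneg_left (hle s') ((hp s a b).1 s')
        _ = d := by rw [← Finset.sum_mul, (hp s a b).2, one_mul]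
    exact mul_le_mul_of_nonneg_left hps hγ0
  have hdγ : d ≤ γ * d := Finset.sup'_le _ _ fun s _ => key s
  have hd0 : d ≤ 0 := by nlinarith
  intro s
  linarith [hle s]

lemma Q_eq_bellman (M : Setup S A B) (f' fp : S → A → ℝ) (s : S) :
    M.Q f' fp s = ∑ a, ∑ b, fp s a * det (M.Rstar fp) s b *
      (M.rA s a b + M.gA * ∑ s', M.p s a b s' * M.VAdag f' s') := by
  have hcol : ∀ a, ∑ b, fp s a * det (M.Rstar fp) s b *
      (M.rA s a b + M.gA * ∑ s', M.p s a b s' * M.VAdag f' s')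
      = fp s a * (M.rA s a (M.Rstar fp s)
          + M.gA * ∑ s', M.p s a (M.Rstar fp s) s' * M.VAdag f' s') := by
    intro a
    rw [Finset.sum_eq_single (M.Rstar fp s)]
    · simp [det]
    · intro b _ hb; simp [det, hb]
    · simp
  simp_rw [hcol, mul_add]
  rw [Finset.sum_add_distrib]
  unfold Setup.Q Setup.rAf Setup.pf
  congr 1
  simp_rw [Finset.mul_sum, Finset.sum_mul, Finset.mul_sum]
  rw [Finset.sum_comm]
  exact Finset.sum_congr rfl fun s' _ => Finset.sum_congr rfl fun a _ => by ring

lemma VAdag_bound [Nonempty S] [Nonempty A] [Nonempty B] (M : Setup S A B) :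
    ∃ C : ℝ, ∀ fp : S → A → ℝ, IsPol fp → ∀ s, M.VAdag fp s ≤ C := by
  set R := Finset.univ.sup' Finset.univ_nonempty
    (fun x : S × A × B => |M.rA x.1 x.2.1 x.2.2|) with hR
  refine ⟨R / (1 - M.gA), fun fp hfp s => ?_⟩
  have hg : IsPol (det (M.Rstar fp)) := isPol_det _
  have hv := M.hVA fp (det (M.Rstar fp)) hfp hg
  set v := M.VA fp (det (M.Rstar fp)) with hvdef
  set m := Finset.univ.sup' Finset.univ_nonempty v with hm
  have hle : ∀ s, v s ≤ m := fun s => Finset.le_sup' v (Finset.mem_univ s)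
  have hRle : ∀ s a b, M.rA s a b ≤ R := fun s a b =>
    (le_abs_self _).trans (Finset.le_sup'
      (fun x : S × A × B => |M.rA x.1 x.2.1 x.2.2|) (Finset.mem_univ (s, a, b)))
  have hstep : ∀ s, v s ≤ R + M.gA * m := by
    intro s
    rw [hv s]
    refine sum_fg_le hfp hg s _ _ fun a b => ?_
    have hps : ∑ s', M.p s a b s' * v s' ≤ m := by
      calc ∑ s', M.p s a b s' * v s' ≤ ∑ s', M.p s a b s' * m :=
            Finset.sum_le_sum fun s' _ =>
              mul_le_mul_of_nonneg_left (hle s') ((M.hp s a b).1 s')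
        _ = m := by rw [← Finset.sum_mul, (M.hp s a b).2, one_mul]
    have := mul_le_mul_of_nonneg_left hps M.hgA0
    linarith [hRle s a b]
  have hmle : m ≤ R + M.gA * m := Finset.sup'_le _ _ fun s _ => hstep s
  have h1 : (0:ℝ) < 1 - M.gA := by linarith [M.hgA1]
  have hmC : m ≤ R / (1 - M.gA) := by
    rw [le_div_iff₀ h1]; nlinarith
  exact (hle s).trans hmC

end Aux

theorem stmt15 {S A B : Type*} [Fintype S] [Fintype A] [Fintype B]
    [Nonempty S] [Nonempty A] [Nonempty B] [DecidableEq B]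
    (M : Setup S A B)
    (L : (S → ℝ) → ℝ) (hLc : Continuous L)
    (hLp : ∀ v w : S → ℝ, SDom v w → L w < L v)
    (ε : ℝ) (hε0 : 0 ≤ ε) (hε1 : ε < 1)
    (f : ℕ → S → A → ℝ) (hf0 : IsPol (f 0))
    (hstep : ∀ t, f (t + 1) ∈ M.Weps L ε (f t)) :
    (∀ t s, M.VAdag (f t) s ≤ M.VAdag (f (t + 1)) s) ∧
    ∃ vinf ∈ closure M.Vset,
      Filter.Tendsto (fun t => M.VAdag (f t)) Filter.atTop (nhds vinf) := by
  have hpol : ∀ t, IsPol (f t) := by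
    intro t
    cases t with
    | zero => exact hf0
    | succ n => exact (hstep n).1.1
  have hmono : ∀ t s, M.VAdag (f t) s ≤ M.VAdag (f (t + 1)) s := by
    intro t
    have hw := (hstep t).1.2
    have hwb : ∀ s, M.VAdag (f t) s ≤ ∑ a, ∑ b,
        f (t + 1) s a * det (M.Rstar (f (t + 1))) s b *
        (M.rA s a b + M.gA * ∑ s', M.p s a b s' * M.VAdag (f t) s') := by
      intro s; rw [← Q_eq_bellman]; exact hw s
    exact bellman_le M.hp M.hgA0 M.hgA1 (hpol (t + 1)) (isPol_det _)
      (M.hVA _ _ (hpol (t + 1)) (isPol_det _)) hwb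
  obtain ⟨C, hC⟩ := VAdag_bound M
  have hbdd : ∀ s, BddAbove (Set.range fun t => M.VAdag (f t) s) :=
    fun s => ⟨C, by rintro x ⟨t, rfl⟩; exact hC _ (hpol t) s⟩
  have hmon : ∀ s, Monotone fun t => M.VAdag (f t) s :=
    fun s => monotone_nat_of_le_succ fun t => hmono t s
  have htend : Filter.Tendsto (fun t => M.VAdag (f t)) Filter.atTop
      (nhds fun s => ⨆ t, M.VAdag (f t) s) := by
    rw [tendsto_pi_nhds]
    intro s
    exact tendsto_atTop_ciSup (hmon s) (hbdd s)
  exact ⟨hmono, _, mem_closure_of_tendsto htend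
    (Filter.Eventually.of_forall fun t => ⟨f t, hpol t, rfl⟩), htend⟩
end

section
/- Consider an SSG with the best-response follower, a Pareto-compliant scalarization L, and ε ∈ [0,1). Let f_0 be any leader policy, let {f_t} satisfy f_{t+1} ∈ W_{1−ε}(f_t) for all t ≥ 0, set v_t := V_A^{f_t†}, and let v_∞ := lim_{t→∞} v_t (which exists). Then v_∞ lies in the topological boundary ∂𝒱 of 𝒱, and for every v ∈ 𝒱: min_{s∈S} ( v(s) − v_∞(s) ) ≤ γ_A · max_{s∈S} ( v(s) − v_∞(s) ). -/
open Finset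

section Helpers

variable {S A B : Type*} [Fintype S] [Fintype A] [Fintype B] [DecidableEq B]

lemma sum_dist_mul_le {α : Type*} [Fintype α] {d u : α → ℝ} {c : ℝ}
    (hd : IsDist d) (hu : ∀ x, u x ≤ c) : ∑ x, d x * u x ≤ c := by
  calc ∑ x, d x * u x ≤ ∑ x, d x * c :=
        Finset.sum_le_sum fun x _ => mul_le_mul_of_nonneg_left (hu x) (hd.1 x)
    _ = c := by rw [← Finset.sum_mul, hd.2, one_mul]

lemma le_sum_dist_mul {α : Type*} [Fintype α] {d u : α → ℝ} {c : ℝ}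
    (hd : IsDist d) (hu : ∀ x, c ≤ u x) : c ≤ ∑ x, d x * u x := by
  calc c = ∑ x, d x * c := by rw [← Finset.sum_mul, hd.2, one_mul]
    _ ≤ ∑ x, d x * u x :=
        Finset.sum_le_sum fun x _ => mul_le_mul_of_nonneg_left (hu x) (hd.1 x)

lemma det_pol {g : S → B} : IsPol (det g) := by
  intro s
  constructor
  · intro b; unfold det; positivity
  · simp [det]

lemma pf_dist (M : Setup S A B) {f : S → A → ℝ} (hf : IsPol f) (s : S) (b : B) :
    IsDist (M.pf f s b) := by
  constructor
  · intro s'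
    exact Finset.sum_nonneg fun a _ => mul_nonneg ((hf s).1 a) ((M.hp s a b).1 s')
  · unfold Setup.pf
    rw [Finset.sum_comm]
    calc ∑ a, ∑ s', f s a * M.p s a b s' = ∑ a, f s a * ∑ s', M.p s a b s' := by
          simp [Finset.mul_sum]
      _ = 1 := by
          simp only [(M.hp s _ b).2, mul_one]
          exact (hf s).2

lemma VAdag_bellman (M : Setup S A B) {f : S → A → ℝ} (hf : IsPol f) (s : S) :
    M.VAdag f s = M.rAf f s (M.Rstar f s)
      + M.gA * ∑ s', M.pf f s (M.Rstar f s) s' * M.VAdag f s' := by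
  have h := M.hVA f (det (M.Rstar f)) hf det_pol s
  have hb : ∀ (X : A → B → ℝ), (∑ a, ∑ b, f s a * det (M.Rstar f) s b * X a b)
      = ∑ a, f s a * X a (M.Rstar f s) := by
    intro X
    refine Finset.sum_congr rfl fun a _ => ?_
    have : ∀ b, f s a * det (M.Rstar f) s b * X a b
        = if b = M.Rstar f s then f s a * X a b else 0 := by
      intro b; unfold det; split <;> simp
    rw [Finset.sum_congr rfl fun b _ => this b, Finset.sum_ite_eq']
    simp
  rw [hb] at h
  show M.VA f (det (M.Rstar f)) s = _
  rw [h]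
  unfold Setup.rAf Setup.pf Setup.VAdag
  simp only [mul_add, Finset.sum_add_distrib, Finset.mul_sum, Finset.sum_mul]
  congr 1
  rw [Finset.sum_comm]
  exact Finset.sum_congr rfl fun a _ => Finset.sum_congr rfl fun s' _ => by ring

/-- `Q f' fv` in terms of `VAdag fv` and the value difference. -/
lemma Q_eq (M : Setup S A B) {fv : S → A → ℝ} (hfv : IsPol fv) (f' : S → A → ℝ) (s : S) :
    M.Q f' fv s = M.VAdag fv s
      - M.gA * ∑ s', M.pf fv s (M.Rstar fv s) s' * (M.VAdag fv s' - M.VAdag f' s') := by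
  have hb := VAdag_bellman M hfv s
  unfold Setup.Q
  have : ∑ s', M.pf fv s (M.Rstar fv s) s' * (M.VAdag fv s' - M.VAdag f' s')
      = ∑ s', M.pf fv s (M.Rstar fv s) s' * M.VAdag fv s'
        - ∑ s', M.pf fv s (M.Rstar fv s) s' * M.VAdag f' s' := by
    rw [← Finset.sum_sub_distrib]
    exact Finset.sum_congr rfl fun s' _ => by ring
  rw [this]
  rw [hb]
  ring

lemma improve (M : Setup S A B) [Nonempty S] {f' f : S → A → ℝ}
    (hf' : IsPol f') (hf : IsPol f)
    (h : ∀ s, M.VAdag f' s ≤ M.Q f' f s) :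
    (∀ s, M.VAdag f' s ≤ M.VAdag f s) ∧ (∀ s, M.Q f' f s ≤ M.VAdag f s) := by
  have key := Q_eq M hf f'
  have h1 : ∀ s, M.VAdag f' s ≤ M.VAdag f s := by
    obtain ⟨s0, -, hs0⟩ := Finset.exists_min_image Finset.univ
      (fun s => M.VAdag f s - M.VAdag f' s) ⟨Classical.arbitrary S, Finset.mem_univ _⟩
    have hd : ∀ s, M.VAdag f s0 - M.VAdag f' s0 ≤ M.VAdag f s - M.VAdag f' s :=
      fun s => hs0 s (Finset.mem_univ s)
    have hsum : M.VAdag f s0 - M.VAdag f' s0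
        ≤ ∑ s', M.pf f s0 (M.Rstar f s0) s' * (M.VAdag f s' - M.VAdag f' s') :=
      le_sum_dist_mul (pf_dist M hf s0 (M.Rstar f s0)) hd
    have hq := h s0
    rw [key s0] at hq
    -- v' s0 ≤ v s0 - γ * Σ ≥ ... derive d ≥ γ d
    set d := M.VAdag f s0 - M.VAdag f' s0 with hdd
    have hγd : M.gA * d ≤ M.gA * ∑ s', M.pf f s0 (M.Rstar f s0) s'
        * (M.VAdag f s' - M.VAdag f' s') := mul_le_mul_of_nonneg_left hsum M.hgA0
    have : M.gA * d ≤ d := by linarith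
    have hd0 : 0 ≤ d := by nlinarith [M.hgA1]
    intro s; linarith [hd s]
  refine ⟨h1, fun s => ?_⟩
  rw [key s]
  have : 0 ≤ ∑ s', M.pf f s (M.Rstar f s) s' * (M.VAdag f s' - M.VAdag f' s') :=
    Finset.sum_nonneg fun s' _ => mul_nonneg ((pf_dist M hf s (M.Rstar f s)).1 s')
      (by linarith [h1 s'])
  nlinarith [M.hgA0]

lemma L_mono {L : (S → ℝ) → ℝ} (hLp : ∀ v w : S → ℝ, SDom v w → L w < L v)
    {v w : S → ℝ} (h : DomGE v w) : L w ≤ L v := by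
  by_cases hvw : v = w
  · rw [hvw]
  · exact (hLp v w ⟨h, hvw⟩).le

lemma Wge_Q_bddAbove (M : Setup S A B) [Nonempty S] [Nonempty A] [Nonempty B]
    (L : (S → ℝ) → ℝ) (hLc : Continuous L) (f' : S → A → ℝ) :
    BddAbove ((fun h => L (M.Q f' h) - L (M.VAdag f')) '' M.Wge f') := by
  obtain ⟨C1, hC1⟩ := Finite.exists_le (fun x : S × A × B => |M.rA x.1 x.2.1 x.2.2|)
  obtain ⟨C2, hC2⟩ := Finite.exists_le (fun s => |M.VAdag f' s|)
  set c := C1 + M.gA * C2 with hc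
  have hbox : ∀ h ∈ M.Wge f', M.Q f' h ∈ Set.Icc (fun _ : S => -c) (fun _ : S => c) := by
    rintro h ⟨hh, -⟩
    have hQ : ∀ s, -c ≤ M.Q f' h s ∧ M.Q f' h s ≤ c := by
      intro s
      set b := M.Rstar h s
      have hr1 : M.rAf h s b ≤ C1 :=
        sum_dist_mul_le (hh s) fun a => (abs_le.mp (hC1 ⟨s, a, b⟩)).2
      have hr2 : -C1 ≤ M.rAf h s b :=
        le_sum_dist_mul (hh s) fun a => (abs_le.mp (hC1 ⟨s, a, b⟩)).1
      have hv1 : ∑ s', M.pf h s b s' * M.VAdag f' s' ≤ C2 :=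
        sum_dist_mul_le (pf_dist M hh s b) fun s' => (abs_le.mp (hC2 s')).2
      have hv2 : -C2 ≤ ∑ s', M.pf h s b s' * M.VAdag f' s' :=
        le_sum_dist_mul (pf_dist M hh s b) fun s' => (abs_le.mp (hC2 s')).1
      have hg1 : M.gA * ∑ s', M.pf h s b s' * M.VAdag f' s' ≤ M.gA * C2 :=
        mul_le_mul_of_nonneg_left hv1 M.hgA0
      have hg2 : M.gA * (-C2) ≤ M.gA * ∑ s', M.pf h s b s' * M.VAdag f' s' :=
        mul_le_mul_of_nonneg_left hv2 M.hgA0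
      constructor
      · show -c ≤ M.rAf h s b + M.gA * ∑ s', M.pf h s b s' * M.VAdag f' s'
        have : M.gA * (-C2) = -(M.gA * C2) := by ring
        rw [this] at hg2
        simp only [hc]; linarith
      · show M.rAf h s b + M.gA * ∑ s', M.pf h s b s' * M.VAdag f' s' ≤ c
        simp only [hc]; linarith
    exact Set.mem_Icc.mpr ⟨fun s => (hQ s).1, fun s => (hQ s).2⟩
  have hcpt : IsCompact (Set.Icc (fun _ : S => -c) (fun _ : S => c)) := isCompact_Icc
  obtain ⟨u, hu⟩ := (hcpt.image hLc).bddAbove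
  refine ⟨u - L (M.VAdag f'), ?_⟩
  rintro y ⟨h, hh, rfl⟩
  have : L (M.Q f' h) ≤ u := hu ⟨M.Q f' h, hbox h hh, rfl⟩
  simp only []
  linarith

end Helpers

theorem stmt17 {S A B : Type*} [Fintype S] [Fintype A] [Fintype B]
    [Nonempty S] [Nonempty A] [Nonempty B] [DecidableEq B]
    (M : Setup S A B)
    (L : (S → ℝ) → ℝ) (hLc : Continuous L)
    (hLp : ∀ v w : S → ℝ, SDom v w → L w < L v)
    (ε : ℝ) (hε0 : 0 ≤ ε) (hε1 : ε < 1)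
    (f : ℕ → S → A → ℝ) (hf0 : IsPol (f 0))
    (hstep : ∀ t, f (t + 1) ∈ M.Weps L ε (f t))
    (vinf : S → ℝ)
    (hvinf : Filter.Tendsto (fun t => M.VAdag (f t)) Filter.atTop (nhds vinf)) :
    vinf ∈ frontier M.Vset ∧
    ∀ v ∈ M.Vset, (⨅ s, (v s - vinf s)) ≤ M.gA * ⨆ s, (v s - vinf s) := by
  have hfpol : ∀ t, IsPol (f t) := by
    intro t
    cases t with
    | zero => exact hf0
    | succ n => exact (hstep n).1.1
  set vt : ℕ → S → ℝ := fun t => M.VAdag (f t) with hvt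
  have hvs : ∀ s, Filter.Tendsto (fun t => vt t s) Filter.atTop (nhds (vinf s)) :=
    fun s => tendsto_pi_nhds.mp hvinf s
  have hmono : ∀ t s, vt t s ≤ vt (t + 1) s := fun t =>
    (improve M (hfpol t) (hfpol (t + 1)) (hstep t).1.2).1
  have hmono' : ∀ s, Monotone fun t => vt t s := fun s =>
    monotone_nat_of_le_succ fun t => hmono t s
  have hle : ∀ t s, vt t s ≤ vinf s := fun t s => (hmono' s).ge_of_tendsto (hvs s) t
  have key2 : ∀ w ∈ M.Vset, (⨅ s, (w s - vinf s)) ≤ M.gA * ⨆ s, (w s - vinf s) := by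
    rintro w hw
    obtain ⟨fv, hfv, rfl⟩ := hw
    by_contra hcon
    push_neg at hcon
    set w := M.VAdag fv with hwdef
    set m := ⨅ s, (w s - vinf s) with hmdef
    set Mx := ⨆ s, (w s - vinf s) with hMxdef
    have hm : ∀ s, m ≤ w s - vinf s := fun s => by
      rw [hmdef]; exact ciInf_le ((Set.finite_range _).bddBelow) s
    have hM : ∀ s, w s - vinf s ≤ Mx := fun s => by
      rw [hMxdef]
      exact le_ciSup (f := fun s => w s - vinf s) ((Set.finite_range _).bddAbove) s
    have hpos : 0 < m - M.gA * Mx := by linarith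
    set q : S → ℝ := fun s => M.rAf fv s (M.Rstar fv s)
      + M.gA * ∑ s', M.pf fv s (M.Rstar fv s) s' * vinf s' with hqdef
    have hqdiff : ∀ s, q s - vinf s = (w s - vinf s)
        - M.gA * ∑ s', M.pf fv s (M.Rstar fv s) s' * (w s' - vinf s') := by
      intro s
      have hb := VAdag_bellman M hfv s
      have hsub : ∑ s', M.pf fv s (M.Rstar fv s) s' * (w s' - vinf s')
          = ∑ s', M.pf fv s (M.Rstar fv s) s' * w s'
            - ∑ s', M.pf fv s (M.Rstar fv s) s' * vinf s' := by
        rw [← Finset.sum_sub_distrib]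
        exact Finset.sum_congr rfl fun _ _ => by ring
      rw [hsub, mul_sub]
      have hq' : q s = M.rAf fv s (M.Rstar fv s)
          + M.gA * ∑ s', M.pf fv s (M.Rstar fv s) s' * vinf s' := rfl
      linarith [hb, hq']
    have hqge : ∀ s, vinf s + (m - M.gA * Mx) ≤ q s := by
      intro s
      have hsum : ∑ s', M.pf fv s (M.Rstar fv s) s' * (w s' - vinf s') ≤ Mx :=
        sum_dist_mul_le (pf_dist M hfv s _) hM
      have h1 : M.gA * ∑ s', M.pf fv s (M.Rstar fv s) s' * (w s' - vinf s')
          ≤ M.gA * Mx := mul_le_mul_of_nonneg_left hsum M.hgA0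
      have h2 := hqdiff s
      linarith [hm s]
    have hSD : SDom q vinf := by
      refine ⟨fun s => by linarith [hqge s], ?_⟩
      intro hqe
      have := hqge (Classical.arbitrary S)
      rw [hqe] at this
      linarith
    have hLq : L vinf < L q := hLp q vinf hSD
    have hQt : Filter.Tendsto (fun t => M.Q (f t) fv) Filter.atTop (nhds q) := by
      rw [tendsto_pi_nhds]
      intro s
      simp only [Setup.Q, hqdef]
      refine Filter.Tendsto.const_add _ (Filter.Tendsto.const_mul _ ?_)
      exact tendsto_finset_sum _ fun s' _ => (hvs s').const_mul _
    have hEv : ∀ᶠ t in Filter.atTop, ∀ s' : S,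
        M.gA * (vinf s' - vt t s') ≤ m - M.gA * Mx := by
      rw [Filter.eventually_all]
      intro s'
      have htend : Filter.Tendsto (fun t => M.gA * (vinf s' - vt t s'))
          Filter.atTop (nhds 0) := by
        have := ((hvs s').const_sub (vinf s')).const_mul M.gA
        simpa using this
      exact htend.eventually (eventually_le_nhds hpos)
    have hchain : ∀ᶠ t in Filter.atTop,
        (1 - ε) * (L (M.Q (f t) fv) - L (vt t)) ≤ L (vt (t + 1)) - L (vt t) := by
      filter_upwards [hEv] with t hE
      have hWmem : fv ∈ M.Wge (f t) := by
        refine ⟨hfv, fun s => ?_⟩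
        have hQe := Q_eq M hfv (f t) s
        have hsum : ∑ s', M.pf fv s (M.Rstar fv s) s' * (M.gA * (w s' - vt t s')) ≤ m := by
          apply sum_dist_mul_le (pf_dist M hfv s _)
          intro s'
          have h1 : M.gA * (w s' - vinf s') ≤ M.gA * Mx :=
            mul_le_mul_of_nonneg_left (hM s') M.hgA0
          have h2 := hE s'
          have h3 : M.gA * (w s' - vt t s')
              = M.gA * (w s' - vinf s') + M.gA * (vinf s' - vt t s') := by ring
          linarith
        have hconv : M.gA * ∑ s', M.pf fv s (M.Rstar fv s) s' * (w s' - vt t s')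
            = ∑ s', M.pf fv s (M.Rstar fv s) s' * (M.gA * (w s' - vt t s')) := by
          rw [Finset.mul_sum]
          exact Finset.sum_congr rfl fun _ _ => by ring
        have hws : m ≤ w s - vt t s := by
          have := hle t s
          linarith [hm s]
        rw [hQe]
        have : M.gA * ∑ s', M.pf fv s (M.Rstar fv s) s' * (w s' - vt t s') ≤ m := by
          rw [hconv]; exact hsum
        show vt t s ≤ w s - _
        linarith
      have himp := improve M (hfpol t) (hfpol (t + 1)) (hstep t).1.2
      have hQle : L (M.Q (f t) (f (t + 1))) ≤ L (vt (t + 1)) := L_mono hLp himp.2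
      have hbdd := Wge_Q_bddAbove M L hLc (f t)
      have h1 : (1 - ε) * (L (M.Q (f t) fv) - L (vt t)) ≤ (1 - ε) *
          sSup ((fun h => L (M.Q (f t) h) - L (M.VAdag (f t))) '' M.Wge (f t)) :=
        mul_le_mul_of_nonneg_left (le_csSup hbdd ⟨fv, hWmem, rfl⟩) (by linarith)
      have h2 := (hstep t).2
      calc (1 - ε) * (L (M.Q (f t) fv) - L (vt t)) ≤ _ := h1
        _ ≤ L (M.Q (f t) (f (t + 1))) - L (M.VAdag (f t)) := h2
        _ ≤ L (vt (t + 1)) - L (vt t) := by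
            simp only [hvt]
            linarith [hQle]
    have hLv : Filter.Tendsto (fun t => L (vt t)) Filter.atTop (nhds (L vinf)) :=
      (hLc.tendsto vinf).comp hvinf
    have hLv1 : Filter.Tendsto (fun t => L (vt (t + 1))) Filter.atTop (nhds (L vinf)) :=
      hLv.comp (Filter.tendsto_add_atTop_nat 1)
    have hLqt : Filter.Tendsto (fun t => L (M.Q (f t) fv)) Filter.atTop (nhds (L q)) :=
      (hLc.tendsto q).comp hQt
    have hlim1 : Filter.Tendsto (fun t => (1 - ε) * (L (M.Q (f t) fv) - L (vt t)))
        Filter.atTop (nhds ((1 - ε) * (L q - L vinf))) := (hLqt.sub hLv).const_mul _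
    have hlim2 : Filter.Tendsto (fun t => L (vt (t + 1)) - L (vt t))
        Filter.atTop (nhds 0) := by
      have := hLv1.sub hLv
      simpa using this
    have hfin : (1 - ε) * (L q - L vinf) ≤ 0 :=
      le_of_tendsto_of_tendsto hlim1 hlim2 hchain
    nlinarith
  have hcl : vinf ∈ closure M.Vset :=
    mem_closure_of_tendsto hvinf (Filter.Eventually.of_forall fun t => ⟨f t, hfpol t, rfl⟩)
  have hint : vinf ∉ interior M.Vset := by
    intro hin
    obtain ⟨δ, hδ, hball⟩ := Metric.mem_nhds_iff.mp (mem_interior_iff_mem_nhds.mp hin)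
    have hmem : (fun s => vinf s + δ / 2) ∈ M.Vset := by
      apply hball
      rw [Metric.mem_ball, dist_pi_lt_iff hδ]
      intro s
      rw [Real.dist_eq]
      rw [show vinf s + δ / 2 - vinf s = δ / 2 by ring, abs_of_pos (by linarith)]
      linarith
    have h := key2 _ hmem
    simp only [add_sub_cancel_left] at h
    rw [ciInf_const, ciSup_const] at h
    nlinarith [M.hgA1]
  exact ⟨⟨hcl, hint⟩, key2⟩
end
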